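/- If N is a normal subgroup of G_{p,q}, then the order of N belongs to {1, p, q, pq, 2pq, pq², 2pq²}. -/

import Mathlib

open Multiplicative

namespace Mizerka

/-- The standing hypotheses: `p` and `q` are odd primes with `q ∣ p - 1`, and `i` is a
natural number with `i ≡ 1 (mod q)` whose multiplicative order modulo `p` equals `q`. -/
structure Hyp (p q i : ℕ) : Prop where
  hp : Nat.Prime p
  hq : Nat.Prime q
  hoddp : Odd p
  hoddq : Odd q
  hdvd : q ∣ p - 1
  hmod : i ≡ 1 [MOD q]
  hord : orderOf (i : ZMod p) = q

namespace Hyp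

variable {p q i : ℕ}

theorem coprime_q (h : Hyp p q i) : Nat.Coprime i q := by
  have h1 : i % q = 1 % q := h.hmod
  unfold Nat.Coprime
  rw [Nat.gcd_comm, Nat.gcd_rec, h1, ← Nat.gcd_rec, Nat.gcd_one_right]

theorem coprime_p (h : Hyp p q i) : Nat.Coprime i p := by
  haveI : NeZero p := ⟨h.hp.ne_zero⟩
  have hq1 : q - 1 + 1 = q := Nat.succ_pred_eq_of_pos h.hq.pos
  have hmul : (i : ZMod p) * (i : ZMod p) ^ (q - 1) = 1 := by
    rw [← pow_succ', hq1, ← h.hord, pow_orderOf_eq_one]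
  exact (ZMod.isUnit_iff_coprime i p).mp (IsUnit.of_mul_eq_one _ hmul)

theorem coprime (h : Hyp p q i) : Nat.Coprime i (p * q) :=
  Nat.Coprime.mul_right h.coprime_p h.coprime_q

theorem pow_q_modeq (h : Hyp p q i) : i ^ q ≡ 1 [MOD p * q] := by
  have hpq : p ≠ q := by
    have h1 : 0 < p - 1 := by have := h.hp.two_le; omega
    have := Nat.le_of_dvd h1 h.hdvd
    omega
  have hc : Nat.Coprime p q := (Nat.coprime_primes h.hp h.hq).mpr hpq
  rw [← Nat.modEq_and_modEq_iff_modEq_mul hc]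
  constructor
  · haveI : NeZero p := ⟨h.hp.ne_zero⟩
    have hcast : ((i ^ q : ℕ) : ZMod p) = ((1 : ℕ) : ZMod p) := by
      push_cast
      rw [← h.hord, pow_orderOf_eq_one]
    exact (ZMod.natCast_eq_natCast_iff _ _ _).mp hcast
  · calc i ^ q ≡ 1 ^ q [MOD q] := h.hmod.pow q
      _ = 1 := one_pow q

/-- The unit of `ZMod (p*q)` determined by `i`. -/
def unit (h : Hyp p q i) : (ZMod (p * q))ˣ := ZMod.unitOfCoprime i h.coprime

/-- The unit of `ZMod p` determined by `i`. -/
def unitP (h : Hyp p q i) : (ZMod p)ˣ := ZMod.unitOfCoprime i h.coprime_p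

theorem unit_pow (h : Hyp p q i) : h.unit ^ q = 1 := by
  apply Units.ext
  have h2 : ((i ^ q : ℕ) : ZMod (p * q)) = ((1 : ℕ) : ZMod (p * q)) :=
    (ZMod.natCast_eq_natCast_iff _ _ _).mpr h.pow_q_modeq
  push_cast at h2
  simpa [Hyp.unit] using h2

theorem unitP_pow (h : Hyp p q i) : h.unitP ^ q = 1 := by
  apply Units.ext
  have h2 : (i : ZMod p) ^ q = 1 := by rw [← h.hord]; exact pow_orderOf_eq_one _
  simpa [Hyp.unitP] using h2

end Hyp

/-- Multiplication by a unit, as an automorphism of the (multiplicatively written)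
cyclic group `ZMod n`. -/
def zmodMulAut (n : ℕ) : (ZMod n)ˣ →* MulAut (Multiplicative (ZMod n)) where
  toFun u :=
    { toFun := fun x => ofAdd ((u : ZMod n) * x.toAdd)
      invFun := fun x => ofAdd (((u⁻¹ : (ZMod n)ˣ) : ZMod n) * x.toAdd)
      left_inv := fun x => by simp
      right_inv := fun x => by simp
      map_mul' := fun x y => by simp [mul_add, ← ofAdd_add] }
  map_one' := by ext x; simp
  map_mul' u v := by ext x; simp [mul_assoc]

/-- The function underlying the automorphism of the dihedral group induced by
multiplication by a unit on the rotation part. -/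
def dihedralAutFun (n : ℕ) (u : (ZMod n)ˣ) : DihedralGroup n → DihedralGroup n
  | .r j => .r ((u : ZMod n) * j)
  | .sr j => .sr ((u : ZMod n) * j)

/-- Multiplication of indices by a unit, as an automorphism of the dihedral group:
`a ↦ a^u`, `b ↦ b`. -/
def dihedralAut (n : ℕ) : (ZMod n)ˣ →* MulAut (DihedralGroup n) where
  toFun u :=
    { toFun := dihedralAutFun n u
      invFun := dihedralAutFun n u⁻¹
      left_inv := fun x => by cases x <;> simp [dihedralAutFun]
      right_inv := fun x => by cases x <;> simp [dihedralAutFun]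
      map_mul' := fun x y => by cases x <;> cases y <;> simp [dihedralAutFun, mul_add, mul_sub] }
  map_one' := by ext x; cases x <;> simp [dihedralAutFun]
  map_mul' u v := by ext x; cases x <;> simp [dihedralAutFun, mul_assoc]

/-- The homomorphism `ZMod q →* G` (written multiplicatively) sending `1` to a fixed
element `g` with `g ^ q = 1`. -/
def zmodPow {G : Type*} [Group G] (q : ℕ) [NeZero q] (g : G) (hg : g ^ q = 1) :
    Multiplicative (ZMod q) →* G where
  toFun x := g ^ (toAdd x).val
  map_one' := by
    show g ^ (toAdd (1 : Multiplicative (ZMod q))).val = 1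
    rw [toAdd_one, ZMod.val_zero, pow_zero]
  map_mul' x y := by
    have key : ∀ m : ℕ, g ^ (m % q) = g ^ m := fun m => by
      conv_rhs => rw [← Nat.div_add_mod m q]
      rw [pow_add, pow_mul, hg, one_pow, one_mul]
    show g ^ (toAdd (x * y)).val = g ^ (toAdd x).val * g ^ (toAdd y).val
    rw [toAdd_mul, ZMod.val_add, key, pow_add]

namespace Hyp

variable {p q i : ℕ}

/-- The action of `C_q` on `C_{pq}` sending the generator to multiplication by `i`. -/
def phiN (h : Hyp p q i) : Multiplicative (ZMod q) →* MulAut (Multiplicative (ZMod (p * q))) :=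
  haveI : NeZero q := ⟨h.hq.ne_zero⟩
  zmodPow q (zmodMulAut (p * q) h.unit) (by rw [← map_pow, h.unit_pow, map_one])

/-- The action of `C_q` on `D_{2pq}` sending the generator to `τ` (`τ(a) = a^i`, `τ(b) = b`). -/
def phiG (h : Hyp p q i) : Multiplicative (ZMod q) →* MulAut (DihedralGroup (p * q)) :=
  haveI : NeZero q := ⟨h.hq.ne_zero⟩
  zmodPow q (dihedralAut (p * q) h.unit) (by rw [← map_pow, h.unit_pow, map_one])

/-- The action of `C_q` on `C_p` sending the generator to multiplication by `i`. -/
def phiF (h : Hyp p q i) : Multiplicative (ZMod q) →* MulAut (Multiplicative (ZMod p)) :=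
  haveI : NeZero q := ⟨h.hq.ne_zero⟩
  zmodPow q (zmodMulAut p h.unitP) (by rw [← map_pow, h.unitP_pow, map_one])

end Hyp

/-- The group `N_{pq²} = ⟨a, c ∣ a^{pq} = c^q = 1, c a c⁻¹ = a^i⟩ = C_{pq} ⋊ C_q`. -/
abbrev Npq2 {p q i : ℕ} (h : Hyp p q i) : Type :=
  Multiplicative (ZMod (p * q)) ⋊[h.phiN] Multiplicative (ZMod q)

/-- The group `G_{p,q} = D_{2pq} ⋊_φ C_q`. -/
abbrev Gpq {p q i : ℕ} (h : Hyp p q i) : Type :=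
  DihedralGroup (p * q) ⋊[h.phiG] Multiplicative (ZMod q)

/-- The Frobenius group `F_{p,q} = C_p ⋊ C_q` (the nonabelian group of order `pq`). -/
abbrev Fpq {p q i : ℕ} (h : Hyp p q i) : Type :=
  Multiplicative (ZMod p) ⋊[h.phiF] Multiplicative (ZMod q)

variable {p q i : ℕ}

/-- The generator `a` of `N_{pq²}`. -/
def aN (h : Hyp p q i) : Npq2 h := SemidirectProduct.inl (ofAdd 1)

/-- The generator `c` of `N_{pq²}`. -/
def cN (h : Hyp p q i) : Npq2 h := SemidirectProduct.inr (ofAdd 1)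

/-- The generator `a` of `G_{p,q}`. -/
def aG (h : Hyp p q i) : Gpq h := SemidirectProduct.inl (DihedralGroup.r 1)

/-- The generator `b` of `G_{p,q}`. -/
def bG (h : Hyp p q i) : Gpq h := SemidirectProduct.inl (DihedralGroup.sr 0)

/-- The generator `c` of `G_{p,q}`. -/
def cG (h : Hyp p q i) : Gpq h := SemidirectProduct.inr (ofAdd 1)

/-- The real conjugacy class `(g)^± = (g) ∪ (g⁻¹)`. -/
def realClass {G : Type*} [Group G] (g : G) : Set G := {x | IsConj g x ∨ IsConj g⁻¹ x}

/-- `N` is a normal subgroup whose quotient is an `ℓ`-group (the quotient has `ℓ`-power order,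
i.e. `N` has `ℓ`-power index). -/
def OQuot {G : Type*} [Group G] (ℓ : ℕ) (N : Subgroup G) : Prop :=
  N.Normal ∧ ∃ k : ℕ, N.index = ℓ ^ k

/-- `H` is a large subgroup of `G`: it contains `O^ℓ(G)`, the smallest normal subgroup
with `ℓ`-group quotient, for some prime `ℓ`. -/
def IsLarge {G : Type*} [Group G] (H : Subgroup G) : Prop :=
  ∃ ℓ : ℕ, Nat.Prime ℓ ∧
    ∃ N : Subgroup G, OQuot ℓ N ∧ (∀ M : Subgroup G, OQuot ℓ M → N ≤ M) ∧ N ≤ H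

section Reps

variable {k : Type*} [CommSemiring k] {G : Type*} [Group G]

/-- The subspace `V^H` of `H`-fixed vectors of a representation. -/
def fixedPts {V : Type*} [AddCommMonoid V] [Module k V]
    (ρ : Representation k G V) (H : Subgroup G) : Submodule k V where
  carrier := {v | ∀ g ∈ H, ρ g v = v}
  add_mem' := by
    intro a b ha hb g hg
    rw [map_add, ha g hg, hb g hg]
  zero_mem' := by
    intro g hg
    rw [map_zero]
  smul_mem' := by
    intro c v hv g hg
    rw [map_smul, hv g hg]

end Reps

/-- The weak gap condition for a real representation: `dim V^P ≥ 2 dim V^H` for all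
`P < H ≤ G` with `P` of prime power order. -/
def WeakGap {G : Type*} [Group G] {V : Type*} [AddCommGroup V] [Module ℝ V]
    (ρ : Representation ℝ G V) : Prop :=
  ∀ P H : Subgroup G, P < H → (∃ ℓ k : ℕ, Nat.Prime ℓ ∧ Nat.card P = ℓ ^ k) →
    2 * Module.finrank ℝ (fixedPts ρ H) ≤ Module.finrank ℝ (fixedPts ρ P)

/-- Isomorphism of real representations: an equivariant linear equivalence. -/
def RepIso {G : Type*} [Group G] {U V : Type*} [AddCommGroup U] [Module ℝ U]
    [AddCommGroup V] [Module ℝ V]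
    (ρU : Representation ℝ G U) (ρV : Representation ℝ G V) : Prop :=
  ∃ e : U ≃ₗ[ℝ] V, ∀ (g : G) (u : U), e (ρU g u) = ρV g (e u)

/-- Two real representations are `𝒫`-matched if their restrictions to every subgroup of
prime power order are isomorphic. -/
def PMatched {G : Type*} [Group G] {U V : Type*} [AddCommGroup U] [Module ℝ U]
    [AddCommGroup V] [Module ℝ V]
    (ρU : Representation ℝ G U) (ρV : Representation ℝ G V) : Prop :=
  ∀ P : Subgroup G, (∃ ℓ k : ℕ, Nat.Prime ℓ ∧ Nat.card P = ℓ ^ k) →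
    RepIso (ρU.comp P.subtype) (ρV.comp P.subtype)

/-- A bundled finite-dimensional-free real representation of `G`. -/
structure RealRep (G : Type*) [Group G] where
  carrier : Type
  [acg : AddCommGroup carrier]
  [mod : Module ℝ carrier]
  rho : Representation ℝ G carrier

attribute [instance] RealRep.acg RealRep.mod

theorem dihedralAut_pow_r (n : ℕ) (u : (ZMod n)ˣ) (k : ℕ) (m : ZMod n) :
    ((dihedralAut n u) ^ k) (DihedralGroup.r m)
      = DihedralGroup.r (((u ^ k : (ZMod n)ˣ) : ZMod n) * m) := by
  induction k generalizing m with
  | zero => simp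
  | succ k ih =>
    rw [pow_succ, MulAut.mul_apply]
    have h1 : (dihedralAut n u) (DihedralGroup.r m) = DihedralGroup.r ((u : ZMod n) * m) := rfl
    rw [h1, ih, pow_succ, Units.val_mul, mul_assoc]

theorem Hyp.phiG_r (h : Hyp p q i) (z : Multiplicative (ZMod q)) (m : ZMod (p * q)) :
    h.phiG z (DihedralGroup.r m)
      = DihedralGroup.r (((h.unit ^ (toAdd z).val : (ZMod (p * q))ˣ) : ZMod (p * q)) * m) := by
  have h1 : h.phiG z = (dihedralAut (p * q) h.unit) ^ (toAdd z).val := rfl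
  rw [h1, dihedralAut_pow_r]

theorem r_inv (n : ℕ) (m : ZMod n) : (DihedralGroup.r m)⁻¹ = DihedralGroup.r (-m) := rfl

/-- The subgroup `N_{pq²} = {(aˡ, cᵐ)}` of `G_{p,q}`. -/
def NSub (h : Hyp p q i) : Subgroup (Gpq h) where
  carrier := {x | ∃ l : ZMod (p * q), x.left = DihedralGroup.r l}
  one_mem' := ⟨0, rfl⟩
  mul_mem' := by
    rintro x y ⟨lx, hx⟩ ⟨ly, hy⟩
    refine ⟨lx + (h.unit ^ (toAdd x.right).val : (ZMod (p * q))ˣ) * ly, ?_⟩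
    rw [SemidirectProduct.mul_left, hx, hy, h.phiG_r, DihedralGroup.r_mul_r]
  inv_mem' := by
    rintro x ⟨lx, hx⟩
    refine ⟨-((h.unit ^ (toAdd x.right⁻¹).val : (ZMod (p * q))ˣ) * lx), ?_⟩
    rw [SemidirectProduct.inv_left, hx, r_inv, h.phiG_r]
    congr 1
    ring

/-- The subgroup `N_{2pq} = {(bᵉaˡ, 1)} ≅ D_{2pq}` of `G_{p,q}`. -/
def N2pqSub (h : Hyp p q i) : Subgroup (Gpq h) :=
  MonoidHom.ker SemidirectProduct.rightHom

/-- The subgroup `N¹_{pq} = {(aˡ, 1)}` of `G_{p,q}`. -/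
def NpqOneSub (h : Hyp p q i) : Subgroup (Gpq h) where
  carrier := {x | x.right = 1 ∧ ∃ l : ZMod (p * q), x.left = DihedralGroup.r l}
  one_mem' := ⟨rfl, 0, rfl⟩
  mul_mem' := by
    rintro x y ⟨hx1, lx, hx⟩ ⟨hy1, ly, hy⟩
    refine ⟨by rw [SemidirectProduct.mul_right, hx1, hy1, mul_one],
      lx + (h.unit ^ (toAdd x.right).val : (ZMod (p * q))ˣ) * ly, ?_⟩
    rw [SemidirectProduct.mul_left, hx, hy, h.phiG_r, DihedralGroup.r_mul_r]
  inv_mem' := by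
    rintro x ⟨hx1, lx, hx⟩
    refine ⟨by rw [SemidirectProduct.inv_right, hx1, inv_one],
      -((h.unit ^ (toAdd x.right⁻¹).val : (ZMod (p * q))ˣ) * lx), ?_⟩
    rw [SemidirectProduct.inv_left, hx, r_inv, h.phiG_r]
    congr 1
    ring

/-- The subgroup `N²_{pq} = {(a^{qs}, cᵐ)}` of `G_{p,q}`. -/
def NpqTwoSub (h : Hyp p q i) : Subgroup (Gpq h) where
  carrier := {x | ∃ s : ZMod (p * q), x.left = DihedralGroup.r ((q : ZMod (p * q)) * s)}
  one_mem' := ⟨0, by simp⟩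
  mul_mem' := by
    rintro x y ⟨sx, hx⟩ ⟨sy, hy⟩
    refine ⟨sx + (h.unit ^ (toAdd x.right).val : (ZMod (p * q))ˣ) * sy, ?_⟩
    rw [SemidirectProduct.mul_left, hx, hy, h.phiG_r, DihedralGroup.r_mul_r]
    congr 1
    ring
  inv_mem' := by
    rintro x ⟨sx, hx⟩
    refine ⟨-((h.unit ^ (toAdd x.right⁻¹).val : (ZMod (p * q))ˣ) * sx), ?_⟩
    rw [SemidirectProduct.inv_left, hx, r_inv, h.phiG_r]
    congr 1
    ring

/-- The subgroup `N_p = {(a^{qs}, 1)}` of `G_{p,q}`. -/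
def NpSub (h : Hyp p q i) : Subgroup (Gpq h) where
  carrier := {x | x.right = 1 ∧ ∃ s : ZMod (p * q), x.left = DihedralGroup.r ((q : ZMod (p * q)) * s)}
  one_mem' := ⟨rfl, 0, by simp⟩
  mul_mem' := by
    rintro x y ⟨hx1, sx, hx⟩ ⟨hy1, sy, hy⟩
    refine ⟨by rw [SemidirectProduct.mul_right, hx1, hy1, mul_one],
      sx + (h.unit ^ (toAdd x.right).val : (ZMod (p * q))ˣ) * sy, ?_⟩
    rw [SemidirectProduct.mul_left, hx, hy, h.phiG_r, DihedralGroup.r_mul_r]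
    congr 1
    ring
  inv_mem' := by
    rintro x ⟨hx1, sx, hx⟩
    refine ⟨by rw [SemidirectProduct.inv_right, hx1, inv_one],
      -((h.unit ^ (toAdd x.right⁻¹).val : (ZMod (p * q))ˣ) * sx), ?_⟩
    rw [SemidirectProduct.inv_left, hx, r_inv, h.phiG_r]
    congr 1
    ring

/-- The subgroup `N_q = {(a^{ps}, 1)}` of `G_{p,q}`. -/
def NqSub (h : Hyp p q i) : Subgroup (Gpq h) where
  carrier := {x | x.right = 1 ∧ ∃ s : ZMod (p * q), x.left = DihedralGroup.r ((p : ZMod (p * q)) * s)}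
  one_mem' := ⟨rfl, 0, by simp⟩
  mul_mem' := by
    rintro x y ⟨hx1, sx, hx⟩ ⟨hy1, sy, hy⟩
    refine ⟨by rw [SemidirectProduct.mul_right, hx1, hy1, mul_one],
      sx + (h.unit ^ (toAdd x.right).val : (ZMod (p * q))ˣ) * sy, ?_⟩
    rw [SemidirectProduct.mul_left, hx, hy, h.phiG_r, DihedralGroup.r_mul_r]
    congr 1
    ring
  inv_mem' := by
    rintro x ⟨hx1, sx, hx⟩
    refine ⟨by rw [SemidirectProduct.inv_right, hx1, inv_one],
      -((h.unit ^ (toAdd x.right⁻¹).val : (ZMod (p * q))ˣ) * sx), ?_⟩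
    rw [SemidirectProduct.inv_left, hx, r_inv, h.phiG_r]
    congr 1
    ring

end Mizerka


/-! The kernel `K ≅ D_{2pq}` of `G_{p,q} → C_q` splits a normal subgroup `N` as
`|N| = |N ∩ K| · |N K / K|`, with `|N K / K| ∈ {1, q}`. Since `pq` is odd, a normal subgroup of
`D_{2pq}` containing one reflection contains all of them, so either `K ≤ N` and
`|N| ∈ {2pq, 2pq²}`, or `N ∩ K` consists of rotations and `|N ∩ K|` divides `pq`.
The one order left over, `q²`, is impossible: if `N` maps onto `C_q` it contains some `x = (d, c)`,
and the commutator `[x, a] = a^{±i - 1}` lies in `N ∩ K`; as `i ≢ ±1 (mod p)`, its order is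
divisible by `p`. -/

namespace Subgroup

variable {G G' : Type*} [Group G] [Group G']

theorem card_eq_card_inf_ker_mul_card_map (f : G →* G') (K : Subgroup G) :
    Nat.card K = Nat.card (K ⊓ f.ker : Subgroup G) * Nat.card (K.map f) := by
  rw [← relIndex_ker, ← inf_relIndex_left, ← relIndex_bot_left, ← relIndex_bot_left,
    relIndex_mul_relIndex _ _ _ bot_le inf_le_left]

end Subgroup

namespace SemidirectProduct

variable {N G : Type*} [Group N] [Group G] {φ : G →* MulAut N}

theorem mul_inl_mul_inv (x : N ⋊[φ] G) (n : N) :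
    x * inl n * x⁻¹ = inl (x.left * φ x.right n * x.left⁻¹) := by
  ext <;> simp [mul_assoc]

end SemidirectProduct

namespace DihedralGroup

variable {n : ℕ}

theorem exists_sq_eq_one_mul_r_mul_inv (g : DihedralGroup n) (m : ZMod n) :
    ∃ ε : ZMod n, ε ^ 2 = 1 ∧ g * r m * g⁻¹ = r (ε * m) := by
  cases g with
  | r l => exact ⟨1, one_pow 2, by simp [r_mul_r, add_comm]⟩
  | sr l => exact ⟨-1, by ring, by simp [sr_mul_r, sr_mul_sr]⟩

theorem normal_eq_top_of_sr_mem (hn : Odd n) {H : Subgroup (DihedralGroup n)} (hH : H.Normal)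
    {j : ZMod n} (hj : sr j ∈ H) : H = ⊤ := by
  have h2 : IsUnit (2 : ZMod n) := by
    exact_mod_cast (ZMod.isUnit_iff_coprime 2 n).mpr (Nat.coprime_two_left.mpr hn)
  -- conjugation by `r k` sends `sr j` to `sr (j - 2 k)`
  have hsr : ∀ m, sr m ∈ H := fun m => by
    obtain ⟨k, hk⟩ := h2.dvd (a := j - m)
    convert hH.conj_mem _ hj (r k) using 1
    rw [r_mul_sr, inv_r, sr_mul_r]
    congr 1
    linear_combination -hk
  rw [eq_top_iff]
  rintro (m | m) -
  · simpa [sr_mul_sr] using H.mul_mem (hsr 0) (hsr m)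
  · exact hsr m

end DihedralGroup

namespace Mizerka.Hyp

open DihedralGroup SemidirectProduct

variable {p q i : ℕ}

theorem q_lt_p (h : Hyp p q i) : q < p := by
  have hle : q ≤ p - 1 := Nat.le_of_dvd (Nat.sub_pos_of_lt h.hp.one_lt) h.hdvd
  have := h.hp.two_le
  omega

theorem natCast_q_ne_zero (h : Hyp p q i) : (q : ZMod p) ≠ 0 := by
  rw [Ne, ZMod.natCast_eq_zero_iff]
  exact Nat.not_dvd_of_pos_of_lt h.hq.pos h.q_lt_p

theorem natCast_sq_ne_one (h : Hyp p q i) : (i : ZMod p) ^ 2 ≠ 1 := by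
  intro hi
  have h2 : q = 2 := (Nat.prime_dvd_prime_iff_eq h.hq Nat.prime_two).mp
    (h.hord ▸ orderOf_dvd_of_pow_eq_one hi)
  exact Nat.not_odd_iff_even.mpr (h2 ▸ even_two) h.hoddq

theorem mul_sub_one_mul_q_ne_zero (h : Hyp p q i) {ε : ZMod (p * q)} (hε : ε ^ 2 = 1) :
    (ε * i - 1) * q ≠ 0 := by
  have := Fact.mk h.hp
  intro h0
  let π := ZMod.castHom (dvd_mul_right p q) (ZMod p)
  have hπε : π ε ^ 2 = 1 := by simpa using congrArg π hε
  have hπ0 : (π ε * i - 1) * q = 0 := by simpa using congrArg π h0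
  have hεi : π ε * i = 1 :=
    sub_eq_zero.mp ((mul_eq_zero.mp hπ0).resolve_right h.natCast_q_ne_zero)
  apply h.natCast_sq_ne_one
  calc (i : ZMod p) ^ 2 = π ε ^ 2 * i ^ 2 := by rw [hπε, one_mul]
    _ = 1 := by rw [← mul_pow, hεi, one_pow]

theorem phiG_ofAdd_one_r (h : Hyp p q i) (m : ZMod (p * q)) :
    h.phiG (ofAdd 1) (r m) = r (i * m : ZMod (p * q)) := by
  have : Fact (1 < q) := ⟨h.hq.one_lt⟩
  simp [h.phiG_r, Hyp.unit, ZMod.val_one q]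

theorem card_N2pqSub (h : Hyp p q i) : Nat.card (N2pqSub h) = 2 * (p * q) := by
  rw [N2pqSub, ← range_inl_eq_ker_rightHom, ← DihedralGroup.nat_card]
  exact Nat.card_congr (MonoidHom.ofInjective inl_injective).toEquiv.symm

theorem card_NpqOneSub (h : Hyp p q i) : Nat.card (NpqOneSub h) = p * q := by
  have : NeZero (p * q) := ⟨Nat.mul_ne_zero h.hp.ne_zero h.hq.ne_zero⟩
  refine Eq.trans (Nat.card_congr (Equiv.ofBijective
    (fun l => ⟨inl (r l), rfl, l, rfl⟩ : ZMod (p * q) → NpqOneSub h) ⟨?_, ?_⟩).symm)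
    (Nat.card_zmod (p * q))
  · intro l l' hl
    simpa using congrArg (fun x : NpqOneSub h => (x : Gpq h).left) hl
  · rintro ⟨x, hx1, l, hl⟩
    exact ⟨l, Subtype.ext (SemidirectProduct.ext hl.symm hx1.symm)⟩

theorem card_map_rightHom_dvd (h : Hyp p q i) (N : Subgroup (Gpq h)) :
    Nat.card (N.map rightHom) ∣ q := by
  have : NeZero q := ⟨h.hq.ne_zero⟩
  simpa [Nat.card_eq_fintype_card] using (N.map rightHom).card_subgroup_dvd_card

theorem N2pqSub_le_or_inf_le_NpqOneSub (h : Hyp p q i) {N : Subgroup (Gpq h)} (hN : N.Normal) :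
    N2pqSub h ≤ N ∨ N ⊓ N2pqSub h ≤ NpqOneSub h := by
  by_cases hrefl : ∃ j, inl (sr j) ∈ N
  · obtain ⟨j, hj⟩ := hrefl
    have htop : N.comap inl = ⊤ :=
      normal_eq_top_of_sr_mem (h.hoddp.mul h.hoddq) (hN.comap inl) hj
    left
    rw [N2pqSub, ← range_inl_eq_ker_rightHom]
    rintro _ ⟨d, rfl⟩
    exact (htop ▸ Subgroup.mem_top d : d ∈ N.comap inl)
  · right
    rintro x ⟨hxN, hxK⟩
    refine ⟨hxK, ?_⟩
    rcases hxl : x.left with l | l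
    · exact ⟨l, rfl⟩
    · have hx : x = inl (sr l) := SemidirectProduct.ext hxl (MonoidHom.mem_ker.mp hxK)
      exact absurd ⟨l, hx ▸ hxN⟩ hrefl

theorem exists_mem_inf_N2pqSub_pow_ne_one (h : Hyp p q i) {N : Subgroup (Gpq h)}
    (hN : N.Normal) {x : Gpq h} (hx : x ∈ N) (hxr : x.right = ofAdd 1) :
    ∃ y ∈ N ⊓ N2pqSub h, y ^ q ≠ 1 := by
  obtain ⟨ε, hε, hconj⟩ := exists_sq_eq_one_mul_r_mul_inv x.left (i : ZMod (p * q))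
  have hcomm : x * aG h * x⁻¹ * (aG h)⁻¹ = inl (r (ε * i - 1 : ZMod (p * q))) := by
    rw [aG, mul_inl_mul_inv, hxr, h.phiG_ofAdd_one_r, mul_one, hconj, ← map_inv, ← map_mul,
      inv_r, r_mul_r, sub_eq_add_neg]
  refine ⟨inl (r (ε * i - 1)),
    Subgroup.mem_inf.mpr ⟨?_, MonoidHom.mem_ker.mpr (rightHom_inl _)⟩, ?_⟩
  · rw [← hcomm]
    simpa only [mul_assoc] using N.mul_mem hx (hN.conj_mem _ (N.inv_mem hx) (aG h))
  · rw [← map_pow, r_pow, Ne, map_eq_one_iff _ inl_injective, one_def, r.injEq]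
    exact h.mul_sub_one_mul_q_ne_zero hε

theorem not_card_inf_N2pqSub_dvd (h : Hyp p q i) {N : Subgroup (Gpq h)} (hN : N.Normal)
    (hmap : Nat.card (N.map rightHom) = q) :
    ¬ Nat.card (N ⊓ N2pqSub h : Subgroup (Gpq h)) ∣ q := by
  have : NeZero q := ⟨h.hq.ne_zero⟩
  have htop : N.map rightHom = ⊤ :=
    Subgroup.eq_top_of_card_eq _ (by rw [hmap]; simp [Nat.card_eq_fintype_card])
  obtain ⟨x, hx, hxr⟩ := htop ▸ Subgroup.mem_top (ofAdd (1 : ZMod q))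
  obtain ⟨y, hy, hyq⟩ := h.exists_mem_inf_N2pqSub_pow_ne_one hN hx hxr
  exact fun hdvd =>
    hyq (orderOf_dvd_iff_pow_eq_one.mp ((Subgroup.orderOf_dvd_natCard _ hy).trans hdvd))

end Mizerka.Hyp

open Mizerka in
/-- If `N` is a normal subgroup of `G_{p,q}`, then the order of `N` belongs
to `{1, p, q, pq, 2pq, pq², 2pq²}`. -/
theorem statement_12 {p q i : ℕ} (h : Hyp p q i) (N : Subgroup (Gpq h)) (hN : N.Normal) :
    Nat.card N ∈ ({1, p, q, p * q, 2 * p * q, p * q ^ 2, 2 * p * q ^ 2} : Set ℕ) := by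
  rw [N.card_eq_card_inf_ker_mul_card_map SemidirectProduct.rightHom]
  change Nat.card (N ⊓ N2pqSub h : Subgroup (Gpq h)) * _ ∈ _
  have hmap := (Nat.dvd_prime h.hq).mp (h.card_map_rightHom_dvd N)
  rcases h.N2pqSub_le_or_inf_le_NpqOneSub hN with hK | hK
  · rw [inf_eq_right.mpr hK, h.card_N2pqSub]
    rcases hmap with hm | hm <;> rw [hm] <;> simp [sq, mul_assoc]
  obtain ⟨d₁, d₂, hd₁, hd₂, hd⟩ :=
    Nat.dvd_mul.mp ((Subgroup.card_dvd_of_le hK).trans h.card_NpqOneSub.dvd)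
  have hd₁_eq : Nat.card (N.map SemidirectProduct.rightHom) = q → d₁ = p := fun hm =>
    ((Nat.dvd_prime h.hp).mp hd₁).resolve_left fun h₁ =>
      h.not_card_inf_N2pqSub_dvd hN hm (by rwa [← hd, h₁, one_mul])
  rw [← hd]
  rcases hmap with hm | hm
  · rw [hm]
    rcases (Nat.dvd_prime h.hp).mp hd₁ with h₁ | h₁ <;>
      rcases (Nat.dvd_prime h.hq).mp hd₂ with h₂ | h₂ <;> simp [h₁, h₂]
  · rw [hd₁_eq hm, hm]
    rcases (Nat.dvd_prime h.hq).mp hd₂ with h₂ | h₂ <;> simp [h₂, sq, mul_assoc]
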